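/- arXiv:1406.2722 — 6 statements merged into one kernel-verified Lean document; each statement's English description precedes it below -/
import Mathlib

section
/- Let K be a field and let A = Matrix.fromBlocks X Y Z Q be an (n+m)×(n+m) matrix over K, where X is n×n and Q is m×m, and suppose det(1−Q) ≠ 0. Then for every k and all finsets S, T ⊆ Fin n with S.card = T.card = k, one has ∑_{W ⊆ Fin m} (−1)^{W.card} · det A[Ŝ ∪ Ŵ, T̂ ∪ Ŵ] = det(1−Q) · det (X + Y·(1−Q)⁻¹·Z)[S,T]. (This is the linear-algebraic content of the main theorem identifying the exterior powers of the random walk invariant X + Y(1−Q)⁻¹Z with the graded components of the tangle functor divided by its degree-zero part.) -/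
open Matrix

/-- Determinant of the submatrix of `A` with rows indexed by the elements of `S` and
columns indexed by the elements of `T`, each listed in increasing order.
Defined to be `0` if the cardinalities of `S` and `T` differ
(the empty determinant is `1`). -/
noncomputable def fminor {ι R : Type*} [LinearOrder ι] [CommRing R]
    (A : Matrix ι ι R) (S T : Finset ι) : R :=
  if h : S.card = T.card then
    (Matrix.of fun i j : Fin T.card =>
      A (S.orderEmbOfFin h i) (T.orderEmbOfFin rfl j)).det
  else 0

/-- `Fin n ⊕ Fin m` linearly ordered so that every element of the left summand precedes
every element of the right summand, each summand with its natural order. -/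
abbrev SumLexIdx (n m : ℕ) := Lex (Fin n ⊕ Fin m)

/-- Inclusion of `Fin n` as the left block. -/
def inlL {n m : ℕ} (i : Fin n) : SumLexIdx n m := toLex (Sum.inl i)

/-- Inclusion of `Fin m` as the right block. -/
def inrL {n m : ℕ} (j : Fin m) : SumLexIdx n m := toLex (Sum.inr j)

/-- View a matrix indexed by `Fin n ⊕ Fin m` as a matrix indexed by the linearly
ordered index type `SumLexIdx n m`. -/
def toLexMat {n m : ℕ} {R : Type*} (A : Matrix (Fin n ⊕ Fin m) (Fin n ⊕ Fin m) R) :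
    Matrix (SumLexIdx n m) (SumLexIdx n m) R := fun i j => A (ofLex i) (ofLex j)

/-! After restricting rows and columns to `S` and `T`, the `W`-th summand is the minor on
`Fin k ⊕ W` of `B = [[X_ST, Y_S], [Z_T, Q]]`, a minor containing the whole first block.
Negating the last `m` rows of `B` gives a matrix `B'` whose minors absorb the sign `(-1)^|W|`,
and expanding `det (B' + diag (0, 1))` multilinearly in the rows produces exactly these
minors. Finally `B' + diag (0, 1) = [[X_ST, Y_S], [-Z_T, 1 - Q]]`, whose determinant is
`det (1 - Q) * det (X_ST + Y_S (1 - Q)⁻¹ Z_T)` by the Schur complement formula. -/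

namespace Matrix

theorem fromBlocks_submatrix_sum_map {ι κ ι' κ' α : Type*} (A : Matrix ι ι α)
    (B : Matrix ι κ α) (C : Matrix κ ι α) (D : Matrix κ κ α) (f g : ι' → ι) (f' g' : κ' → κ) :
    (fromBlocks A B C D).submatrix (Sum.map f f') (Sum.map g g') =
      fromBlocks (A.submatrix f g) (B.submatrix f g') (C.submatrix f' g) (D.submatrix f' g') := by
  ext (i | i) (j | j) <;> rfl

section BlockMinors

variable {ι κ R : Type*} [DecidableEq ι] [DecidableEq κ] [CommRing R]

theorem fromBlocks_zero_one_row_inr (b : κ) :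
    (fromBlocks 0 0 0 1 : Matrix (ι ⊕ κ) (ι ⊕ κ) R) (Sum.inr b) =
      (1 : Matrix (ι ⊕ κ) (ι ⊕ κ) R) (Sum.inr b) := by
  rw [← fromBlocks_one]
  ext (j | j) <;> rfl

variable [Fintype ι] [Fintype κ]

theorem det_fromBlocks_neg_neg (A : Matrix ι ι R) (B : Matrix ι κ R) (C : Matrix κ ι R)
    (D : Matrix κ κ R) :
    (fromBlocks A B (-C) (-D)).det = (-1) ^ Fintype.card κ * (fromBlocks A B C D).det := by
  have h : fromBlocks A B (-C) (-D) = fromBlocks 1 0 0 (-1) * fromBlocks A B C D := by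
    simp [fromBlocks_multiply]
  rw [h, det_mul, det_fromBlocks_zero₂₁, det_one, det_neg, det_one, one_mul, mul_one]

theorem det_piecewise_fromBlocks_zero_one_univ_disjSum (M : Matrix (ι ⊕ κ) (ι ⊕ κ) R)
    (W : Finset κ) :
    (of ((Finset.univ.disjSum W).piecewise M.row
      (fromBlocks 0 0 0 1 : Matrix (ι ⊕ κ) (ι ⊕ κ) R).row)).det =
      (M.submatrix (Sum.map id (↑)) (Sum.map id (↑)) : Matrix (ι ⊕ W) (ι ⊕ W) R).det := by
  set s := (Finset.univ : Finset ι).disjSum W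
  have hrows : s.piecewise M.row (fromBlocks 0 0 0 1 : Matrix (ι ⊕ κ) _ R).row =
      s.piecewise M.row (1 : Matrix (ι ⊕ κ) _ R).row := by
    refine s.piecewise_congr (fun _ _ => rfl) fun i hi => ?_
    rcases i with a | b
    · simp [s] at hi
    · exact fromBlocks_zero_one_row_inr b
  let e : ι ⊕ W ≃ s :=
    (Equiv.sumCongr (Equiv.subtypeUnivEquiv fun a => by simp [s]).symm
      (Equiv.subtypeEquivRight fun b => by simp [s])).trans Equiv.subtypeSum.symm
  rw [hrows, det_piecewise_one_eq_submatrix_det, ← det_submatrix_equiv_self e]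
  congr 1
  ext (i | i) (j | j) <;> rfl

theorem det_add_fromBlocks_zero_one (M : Matrix (ι ⊕ κ) (ι ⊕ κ) R) :
    (M + fromBlocks 0 0 0 1).det = ∑ W : Finset κ,
      (M.submatrix (Sum.map id (↑)) (Sum.map id (↑)) : Matrix (ι ⊕ W) (ι ⊕ W) R).det := by
  set E : Matrix (ι ⊕ κ) (ι ⊕ κ) R := fromBlocks 0 0 0 1
  have hvanish : ∀ U : Finset ι, U ≠ Finset.univ → ∀ W : Finset κ,
      (of ((U.disjSum W).piecewise M.row E.row)).det = 0 := by
    intro U hU W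
    obtain ⟨a, ha⟩ := Finset.exists_of_ssubset (Finset.ssubset_univ_iff.mpr hU)
    refine det_eq_zero_of_row_eq_zero (Sum.inl a) fun j => ?_
    rw [of_apply, Finset.piecewise_eq_of_notMem _ _ _ (by simpa using ha.2)]
    rcases j with j | j <;> rfl
  calc (M + E).det = ∑ s : Finset (ι ⊕ κ), (of (s.piecewise M.row E.row)).det :=
        detRowAlternating.toMultilinearMap.map_add_univ M E
    _ = ∑ p : Finset ι × Finset κ, (of ((p.1.disjSum p.2).piecewise M.row E.row)).det :=
        (Finset.sumEquiv.symm.toEquiv.sum_comp fun s => (of (s.piecewise M.row E.row)).det).symm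
    _ = ∑ W : Finset κ, (of ((Finset.univ.disjSum W).piecewise M.row E.row)).det := by
        rw [Fintype.sum_prod_type, Fintype.sum_eq_single Finset.univ fun U hU =>
          Finset.sum_eq_zero fun W _ => hvanish U hU W]
    _ = _ := Finset.sum_congr rfl fun W _ => det_piecewise_fromBlocks_zero_one_univ_disjSum M W

theorem sum_neg_one_pow_mul_det_fromBlocks_submatrix (A : Matrix ι ι R) (B : Matrix ι κ R)
    (C : Matrix κ ι R) (D : Matrix κ κ R) :
    ∑ W : Finset κ, (-1) ^ W.card *
      (fromBlocks A (B.submatrix id (↑)) (C.submatrix (↑) id) (D.submatrix (↑) (↑)) :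
        Matrix (ι ⊕ W) (ι ⊕ W) R).det = (fromBlocks A B (-C) (1 - D)).det := by
  have hsum : fromBlocks A B (-C) (-D) + fromBlocks 0 0 0 1 = fromBlocks A B (-C) (1 - D) := by
    rw [fromBlocks_add]; simp [neg_add_eq_sub]
  rw [← hsum, det_add_fromBlocks_zero_one]
  refine Finset.sum_congr rfl fun W _ => ?_
  rw [fromBlocks_submatrix_sum_map, ← Fintype.card_coe W, ← det_fromBlocks_neg_neg]
  rfl

end BlockMinors

end Matrix

theorem fminor_eq_det_submatrix {ι α R : Type*} [LinearOrder ι] [LinearOrder α] [Fintype α]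
    [CommRing R] (A : Matrix ι ι R) {S T : Finset ι} (hS : S.card = Fintype.card α)
    (hT : T.card = Fintype.card α) {r c : α → ι} (hr : StrictMono r) (hc : StrictMono c)
    (hrS : ∀ a, r a ∈ S) (hcT : ∀ a, c a ∈ T) :
    fminor A S T = (A.submatrix r c).det := by
  generalize hN : Fintype.card α = N at hS hT
  subst hT
  let e := Fintype.orderIsoFinOfCardEq α hN
  rw [fminor, dif_pos hS, ← det_submatrix_equiv_self e.toEquiv,
    ← Finset.orderEmbOfFin_unique hS (fun i => hrS (e i)) (hr.comp e.strictMono),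
    ← Finset.orderEmbOfFin_unique rfl (fun i => hcT (e i)) (hc.comp e.strictMono)]
  rfl

theorem Sum.Lex.strictMono_map {α β γ δ : Type*} [Preorder α] [Preorder β] [Preorder γ]
    [Preorder δ] {f : α → γ} {g : β → δ} (hf : StrictMono f) (hg : StrictMono g) :
    StrictMono fun x : α ⊕ₗ β => toLex (Sum.map f g (ofLex x)) := by
  rintro (a | a) (b | b) h
  · exact Sum.Lex.inl_lt_inl_iff.mpr (hf (Sum.Lex.inl_lt_inl_iff.mp h))
  · exact Sum.Lex.inl_lt_inr _ _
  · exact absurd h Sum.Lex.not_inr_lt_inl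
  · exact Sum.Lex.inr_lt_inr_iff.mpr (hg (Sum.Lex.inr_lt_inr_iff.mp h))

theorem card_image_inlL_union_image_inrL {n m : ℕ} (S : Finset (Fin n)) (W : Finset (Fin m)) :
    (S.image inlL ∪ W.image inrL).card = S.card + W.card := by
  rw [Finset.card_union_of_disjoint,
    Finset.card_image_of_injective (f := inlL) _ (toLex.injective.comp Sum.inl_injective),
    Finset.card_image_of_injective (f := inrL) _ (toLex.injective.comp Sum.inr_injective)]
  simp [Finset.disjoint_left, inlL, inrL]

theorem fminor_toLexMat_image_union {n m k : ℕ} {R : Type*} [CommRing R]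
    (A : Matrix (Fin n ⊕ Fin m) (Fin n ⊕ Fin m) R) {S T : Finset (Fin n)} (hS : S.card = k)
    (hT : T.card = k) (W : Finset (Fin m)) :
    fminor (toLexMat A) (S.image inlL ∪ W.image inrL) (T.image inlL ∪ W.image inrL) =
      (A.submatrix (Sum.map (S.orderEmbOfFin hS) (↑)) (Sum.map (T.orderEmbOfFin hT) (↑)) :
        Matrix (Fin k ⊕ W) (Fin k ⊕ W) R).det := by
  have mem : ∀ (U : Finset (Fin n)) (hU : U.card = k) (x : Fin k ⊕ₗ W),
      toLex (Sum.map (U.orderEmbOfFin hU) (↑) (ofLex x)) ∈ U.image inlL ∪ W.image inrL := by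
    rintro U hU (i | ⟨b, hb⟩)
    · exact Finset.mem_union_left _ (Finset.mem_image_of_mem _ (U.orderEmbOfFin_mem hU i))
    · exact Finset.mem_union_right _ (Finset.mem_image_of_mem _ hb)
  rw [fminor_eq_det_submatrix (α := Fin k ⊕ₗ W) _
    (by simp [card_image_inlL_union_image_inrL, hS])
    (by simp [card_image_inlL_union_image_inrL, hT])
    (Sum.Lex.strictMono_map (S.orderEmbOfFin hS).strictMono (Subtype.strictMono_coe _))
    (Sum.Lex.strictMono_map (T.orderEmbOfFin hT).strictMono (Subtype.strictMono_coe _))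
    (mem S hS) (mem T hT)]
  rfl

/-- For `A = fromBlocks X Y Z Q` with `det (1 - Q) ≠ 0`, the alternating sum over
subsets `W` of the right block of the minors of `A` on rows `Ŝ ∪ Ŵ` and columns
`T̂ ∪ Ŵ` equals `det (1 - Q)` times the corresponding minor of the random walk
invariant `X + Y (1 - Q)⁻¹ Z`. -/
theorem alt_sum_minors_eq_det_mul_minor_schur
    {K : Type*} [Field K] {n m : ℕ}
    (X : Matrix (Fin n) (Fin n) K) (Y : Matrix (Fin n) (Fin m) K)
    (Z : Matrix (Fin m) (Fin n) K) (Q : Matrix (Fin m) (Fin m) K)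
    (hQ : (1 - Q).det ≠ 0) (k : ℕ) (S T : Finset (Fin n))
    (hS : S.card = k) (hT : T.card = k) :
    ∑ W : Finset (Fin m), (-1 : K) ^ W.card *
        fminor (toLexMat (Matrix.fromBlocks X Y Z Q))
          (S.image inlL ∪ W.image inrL) (T.image inlL ∪ W.image inrL)
      = (1 - Q).det * fminor (X + Y * (1 - Q)⁻¹ * Z) S T := by
  set eS := S.orderEmbOfFin hS
  set eT := T.orderEmbOfFin hT
  have : Invertible (1 - Q) := (1 - Q).invertibleOfIsUnitDet (isUnit_iff_ne_zero.mpr hQ)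
  calc _ = (fromBlocks (X.submatrix eS eT) (Y.submatrix eS id) (-Z.submatrix id eT)
        (1 - Q)).det := by
        rw [← sum_neg_one_pow_mul_det_fromBlocks_submatrix]
        simp only [fminor_toLexMat_image_union _ hS hT, fromBlocks_submatrix_sum_map]
        rfl
    _ = (1 - Q).det *
          (X.submatrix eS eT + Y.submatrix eS id * (1 - Q)⁻¹ * Z.submatrix id eT).det := by
        rw [det_fromBlocks₂₂, invOf_eq_nonsing_inv, Matrix.mul_neg, sub_neg_eq_add]
    _ = _ := by
        rw [fminor_eq_det_submatrix _ (hS.trans (Fintype.card_fin k).symm)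
          (hT.trans (Fintype.card_fin k).symm) eS.strictMono eT.strictMono
          (S.orderEmbOfFin_mem hS) (T.orderEmbOfFin_mem hT), submatrix_add, Pi.add_apply,
          Pi.add_apply, submatrix_mul _ _ _ id _ Function.bijective_id,
          submatrix_mul _ _ _ id _ Function.bijective_id]
        rfl
end

section
/- Let R be an integral domain and let A = Matrix.fromBlocks X Y Z Q be an (n+m)×(n+m) matrix over R, where X is n×n and Q is m×m. Set δ = det(1−Q) and assume δ ≠ 0, and let M' = δ•X + Y·adjugate(1−Q)·Z (an n×n matrix over R). Then for every k ≥ 1 and all finsets S, T ⊆ Fin n with S.card = T.card = k, δ^{k−1} divides det M'[S,T] in R. (This is the linear-algebraic form of the corollary that the degree-zero invariant to the power k−1 divides all k×k minors of the degree-one invariant.) -/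
/-!
Write `d = det B` with `B = 1 - Q`. Multiplying `[[X, Y], [-Z, B]]` on the right by
`[[d • 1, 0], [adj B * Z, 1]]` gives the block upper triangular matrix
`[[d • X + Y * adj B * Z, Y], [0, B]]`, so `det (d • X + Y * adj B * Z) * d` equals
`det [[X, Y], [-Z, B]] * d ^ k` for `X` of size `k`; cancelling one `d` leaves `d ^ (k - 1)`
as a factor. A `k × k` minor of `M'` is the same expression built from the corresponding
submatrices of `X`, `Y`, `Z`, so it inherits the factor.
-/

open Matrix

theorem fminor_eq_det_submatrix_s1 {ι R : Type*} [LinearOrder ι] [CommRing R]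
    (A : Matrix ι ι R) {S T : Finset ι} (h : S.card = T.card) :
    fminor A S T = (A.submatrix (S.orderEmbOfFin h) (T.orderEmbOfFin rfl)).det :=
  dif_pos h

namespace Matrix

theorem submatrix_smul_add_mul_mul {R ι κ ι' : Type*} [CommRing R] [Fintype κ] (d : R)
    (X : Matrix ι ι R) (Y : Matrix ι κ R) (W : Matrix κ κ R) (Z : Matrix κ ι R)
    (r c : ι' → ι) :
    (d • X + Y * W * Z).submatrix r c
      = d • X.submatrix r c + Y.submatrix r id * W * Z.submatrix id c := by
  ext
  simp [mul_apply]

variable {R ι κ : Type*} [CommRing R] [Fintype ι] [DecidableEq ι] [Fintype κ] [DecidableEq κ]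

theorem det_smul_add_mul_adjugate_mul_mul_det (X : Matrix ι ι R) (Y : Matrix ι κ R)
    (Z : Matrix κ ι R) (B : Matrix κ κ R) :
    (B.det • X + Y * B.adjugate * Z).det * B.det
      = (fromBlocks X Y (-Z) B).det * B.det ^ Fintype.card ι := by
  have hfactor : fromBlocks X Y (-Z) B * fromBlocks (B.det • 1) 0 (B.adjugate * Z) 1
      = fromBlocks (B.det • X + Y * B.adjugate * Z) Y 0 B := by
    simp [fromBlocks_multiply, Matrix.mul_smul, ← Matrix.mul_assoc, mul_adjugate, Matrix.smul_mul]
  have hdet := congrArg det hfactor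
  rw [det_mul, det_fromBlocks_zero₁₂, det_fromBlocks_zero₂₁, det_smul, det_one, det_one,
    mul_one, mul_one] at hdet
  exact hdet.symm

theorem det_pow_card_sub_one_dvd_det_smul_add_mul_adjugate_mul [IsDomain R]
    (X : Matrix ι ι R) (Y : Matrix ι κ R) (Z : Matrix κ ι R) {B : Matrix κ κ R}
    (hB : B.det ≠ 0) :
    B.det ^ (Fintype.card ι - 1) ∣ (B.det • X + Y * B.adjugate * Z).det := by
  have hidentity := det_smul_add_mul_adjugate_mul_mul_det X Y Z B
  cases hcard : Fintype.card ι with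
  | zero => simp
  | succ k =>
    rw [hcard, pow_succ, ← mul_assoc] at hidentity
    rw [Nat.add_sub_cancel]
    exact Dvd.intro_left _ (mul_right_cancel₀ hB hidentity).symm

end Matrix

theorem det_pow_dvd_minor_of_schur_general
    {R : Type*} [CommRing R] [IsDomain R] {n m : ℕ}
    (X : Matrix (Fin n) (Fin n) R) (Y : Matrix (Fin n) (Fin m) R)
    (Z : Matrix (Fin m) (Fin n) R) (Q : Matrix (Fin m) (Fin m) R)
    (δ : R) (hδdef : δ = (1 - Q).det) (hδ : δ ≠ 0)
    (M' : Matrix (Fin n) (Fin n) R)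
    (hM' : M' = δ • X + Y * (1 - Q).adjugate * Z)
    (k : ℕ) (S T : Finset (Fin n))
    (hS : S.card = k) (hT : T.card = k) :
    δ ^ (k - 1) ∣ fminor M' S T := by
  subst hδdef hM' hT
  rw [fminor_eq_det_submatrix_s1 _ hS, submatrix_smul_add_mul_mul]
  simpa only [Fintype.card_fin] using
    det_pow_card_sub_one_dvd_det_smul_add_mul_adjugate_mul (X.submatrix _ _)
      (Y.submatrix (S.orderEmbOfFin hS) id) (Z.submatrix id (T.orderEmbOfFin rfl)) hδ

/-- Over an integral domain, with `δ = det (1 - Q) ≠ 0` and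
`M' = δ • X + Y ⬝ adjugate (1 - Q) ⬝ Z`, the power `δ^(k-1)` divides every
`k × k` minor of `M'` (for `k ≥ 1`). -/
theorem det_pow_dvd_minor_of_schur
    {R : Type*} [CommRing R] [IsDomain R] {n m : ℕ}
    (X : Matrix (Fin n) (Fin n) R) (Y : Matrix (Fin n) (Fin m) R)
    (Z : Matrix (Fin m) (Fin n) R) (Q : Matrix (Fin m) (Fin m) R)
    (δ : R) (hδdef : δ = (1 - Q).det) (hδ : δ ≠ 0)
    (M' : Matrix (Fin n) (Fin n) R)
    (hM' : M' = δ • X + Y * (1 - Q).adjugate * Z)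
    (k : ℕ) (hk : 1 ≤ k) (S T : Finset (Fin n))
    (hS : S.card = k) (hT : T.card = k) :
    δ ^ (k - 1) ∣ fminor M' S T :=
  det_pow_dvd_minor_of_schur_general X Y Z Q δ hδdef hδ M' hM' k S T hS hT
end

section
/- Let σ be a permutation of Fin n ⊕ Fin m and let Q be the m×m matrix over ℚ defined by Q i j = 1 if σ (Sum.inr j) = Sum.inr i and Q i j = 0 otherwise. Then Q is nilpotent if and only if for every j : Fin m there exist k ≥ 1 and i : Fin n with σ^k (Sum.inr j) = Sum.inl i (i.e., no orbit of σ is entirely contained in the right summand). (This is the algebraic core of the lemma that the closure of a braid is a string link if and only if the closure block of its permutation matrix is nilpotent.) -/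
/-!
Column `j` of `Q ^ k` is zero exactly when the path `inr j, σ (inr j), …, σ^k (inr j)` leaves
the right summand; otherwise it is the basis vector at `σ^k (inr j)`. Since a square matrix over a
commutative semiring is nilpotent iff each of its columns is killed by some power, `Q` is
nilpotent iff every such path eventually enters the left summand.
-/

open Sum Matrix

variable {α β R : Type*} [DecidableEq α] [DecidableEq β]

def closureBlock [Zero R] [One R] (f : α ⊕ β → α ⊕ β) : Matrix β β R :=
  Matrix.of fun i j => if f (inr j) = inr i then 1 else 0

section Semiring

variable [Fintype β] [Semiring R] {f : α ⊕ β → α ⊕ β} {j : β}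

lemma col_mul_closureBlock_of_eq_inl (N : Matrix β β R) {a : α} (h : f (inr j) = inl a) :
    (N * closureBlock f).col j = 0 := by
  ext i
  simp [closureBlock, mul_apply, h]

lemma col_mul_closureBlock_of_eq_inr (N : Matrix β β R) {l : β} (h : f (inr j) = inr l) :
    (N * closureBlock f).col j = N.col l := by
  ext i
  simp [closureBlock, mul_apply, h]

lemma col_pow_closureBlock_eq_zero_iff [Nontrivial R] (f : α ⊕ β → α ⊕ β) (k : ℕ) (j : β) :
    ((closureBlock f : Matrix β β R) ^ k).col j = 0 ↔ ∃ t ≤ k, ∃ a, f^[t] (inr j) = inl a := by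
  induction k generalizing j with
  | zero =>
    simp only [pow_zero, Nat.le_zero, exists_eq_left, Function.iterate_zero_apply, reduceCtorEq,
      exists_false, iff_false]
    intro h
    simpa using congrFun h j
  | succ k ih =>
    rw [pow_succ]
    rcases hf : f (inr j) with a | l
    · simp only [col_mul_closureBlock_of_eq_inl _ hf, true_iff]
      exact ⟨1, by omega, a, hf⟩
    · rw [col_mul_closureBlock_of_eq_inr _ hf, ih]
      simp only [← Nat.lt_add_one_iff, Nat.exists_lt_succ_left (n := k + 1),
        Function.iterate_zero_apply, Function.iterate_succ_apply, hf, reduceCtorEq, exists_false,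
        false_or]

end Semiring

theorem isNilpotent_closureBlock_iff [Fintype β] [CommSemiring R] [Nontrivial R]
    (f : α ⊕ β → α ⊕ β) :
    IsNilpotent (closureBlock f : Matrix β β R) ↔
      ∀ j, ∃ k, 1 ≤ k ∧ ∃ a, f^[k] (inr j) = inl a := by
  rw [isNilpotent_iff_forall_col]
  refine forall_congr' fun j => ?_
  simp only [col_pow_closureBlock_eq_zero_iff]
  constructor
  · rintro ⟨-, t, -, a, ha⟩
    refine ⟨t, Nat.one_le_iff_ne_zero.mpr ?_, a, ha⟩
    rintro rfl
    simp at ha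
  · rintro ⟨k, -, a, ha⟩
    exact ⟨k, k, le_rfl, a, ha⟩

/-- For a permutation `σ` of `Fin n ⊕ Fin m`, the 0-1 matrix `Q` recording the part of
`σ` mapping the right summand into itself is nilpotent if and only if every point of
the right summand is eventually carried into the left summand by iterating `σ`. -/
theorem closure_block_nilpotent_iff
    {n m : ℕ} (σ : Equiv.Perm (Fin n ⊕ Fin m))
    (Q : Matrix (Fin m) (Fin m) ℚ)
    (hQ : ∀ i j, Q i j = if σ (Sum.inr j) = Sum.inr i then 1 else 0) :
    IsNilpotent Q ↔
      ∀ j : Fin m, ∃ k : ℕ, 1 ≤ k ∧ ∃ i : Fin n,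
        (σ ^ k) (Sum.inr j) = Sum.inl i := by
  obtain rfl : Q = closureBlock σ := Matrix.ext hQ
  simp only [isNilpotent_closureBlock_iff, Equiv.Perm.coe_pow]
end

section
/- Let Q : ℝ → Matrix (Fin m) (Fin m) ℝ be continuous in a neighborhood of t = 1 and suppose that the matrix Q 1 is nilpotent. Then for every d > 0 there exist ε > 0 and C > 0 such that for all t with |t − 1| < ε and all natural numbers N, ‖(Q t)^N‖ ≤ C · d^N. -/
/- If `Q 1 ^ k = 0`, then `‖Q t ^ k‖ < d ^ k` for `t` near `1` by continuity. Splitting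
`N = k + (N - k)` and using submultiplicativity, this decay propagates to all powers once the
finitely many powers `Q t ^ j`, `j < k`, are bounded, which continuity also gives uniformly
near `t = 1`. -/

open Matrix

/- Equip square matrices with the `L∞` operator norm
(maximum over rows of the sum of absolute values of the entries). -/
attribute [local instance] Matrix.linftyOpNormedRing

open Filter Topology

section SeminormedRing

variable {R : Type*} [SeminormedRing R]

theorem norm_pow_le_mul_pow_of_norm_pow_le {a : R} {k : ℕ} {d M : ℝ} (hk : 0 < k)
    (hak : ‖a ^ k‖ ≤ d ^ k) (hsmall : ∀ j < k, ‖a ^ j‖ ≤ M * d ^ j) (N : ℕ) :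
    ‖a ^ N‖ ≤ M * d ^ N := by
  induction N using Nat.strong_induction_on with
  | _ N ih =>
    rcases lt_or_ge N k with hN | hN
    · exact hsmall N hN
    · calc ‖a ^ N‖ = ‖a ^ k * a ^ (N - k)‖ := by rw [← pow_add, Nat.add_sub_cancel' hN]
        _ ≤ ‖a ^ k‖ * ‖a ^ (N - k)‖ := norm_mul_le _ _
        _ ≤ d ^ k * (M * d ^ (N - k)) :=
          mul_le_mul hak (ih _ (by omega)) (norm_nonneg _) ((norm_nonneg _).trans hak)
        _ = M * d ^ N := by rw [mul_left_comm, ← pow_add, Nat.add_sub_cancel' hN]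

theorem exists_eventually_norm_pow_le_mul_pow {a : R} {k : ℕ} {d : ℝ} (hk : 0 < k)
    (hd : 0 < d) (hak : ‖a ^ k‖ < d ^ k) :
    ∃ C, 0 < C ∧ ∀ᶠ b in 𝓝 a, ∀ N : ℕ, ‖b ^ N‖ ≤ C * d ^ N := by
  set C := ∑ j ∈ Finset.range k, (‖a ^ j‖ + 1) / d ^ j
  have hC : 0 < C := Finset.sum_pos (fun j _ => by positivity) ⟨0, by simpa using hk⟩
  have hnear_k : ∀ᶠ b in 𝓝 a, ‖b ^ k‖ < d ^ k :=
    (continuous_pow k).norm.continuousAt.eventually_lt continuousAt_const hak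
  have hnear_j : ∀ᶠ b in 𝓝 a, ∀ j ∈ Finset.range k, ‖b ^ j‖ < ‖a ^ j‖ + 1 :=
    (Finset.eventually_all _).2 fun j _ =>
      (continuous_pow j).norm.continuousAt.eventually_lt continuousAt_const (lt_add_one _)
  refine ⟨C, hC, (hnear_k.and hnear_j).mono fun b ⟨hbk, hbj⟩ =>
    norm_pow_le_mul_pow_of_norm_pow_le hk hbk.le fun j hj => ?_⟩
  have hj' : j ∈ Finset.range k := Finset.mem_range.2 hj
  calc ‖b ^ j‖ ≤ (‖a ^ j‖ + 1) / d ^ j * d ^ j := by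
        rw [div_mul_cancel₀ _ (pow_pos hd j).ne']; exact (hbj j hj').le
    _ ≤ C * d ^ j := by
        gcongr
        exact Finset.single_le_sum (f := fun j => (‖a ^ j‖ + 1) / d ^ j)
          (fun i _ => by positivity) hj'

end SeminormedRing

/-- If `Q : ℝ → Matrix (Fin m) (Fin m) ℝ` is continuous in a neighborhood of `t = 1`
and `Q 1` is nilpotent, then for every `d > 0` there are `ε > 0` and `C > 0` such
that `‖(Q t)^N‖ ≤ C * d^N` for all `t` with `|t - 1| < ε` and all `N`. -/
theorem norm_pow_le_of_nilpotent_at_one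
    {m : ℕ} (Q : ℝ → Matrix (Fin m) (Fin m) ℝ)
    (hcont : ∃ U ∈ nhds (1 : ℝ), ContinuousOn Q U)
    (hnil : ∃ N : ℕ, (Q 1) ^ N = 0) :
    ∀ d : ℝ, 0 < d → ∃ ε : ℝ, 0 < ε ∧ ∃ C : ℝ, 0 < C ∧
      ∀ t : ℝ, |t - 1| < ε → ∀ N : ℕ, ‖(Q t) ^ N‖ ≤ C * d ^ N := by
  intro d hd
  obtain ⟨U, hU, hQU⟩ := hcont
  obtain ⟨n, hn⟩ := hnil
  have hsmall : ‖Q 1 ^ (n + 1)‖ < d ^ (n + 1) := by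
    rw [pow_succ, hn, zero_mul, norm_zero]; positivity
  obtain ⟨C, hC, hnear⟩ := exists_eventually_norm_pow_le_mul_pow n.succ_pos hd hsmall
  obtain ⟨ε, hε, hball⟩ :=
    Metric.eventually_nhds_iff.1 ((hQU.continuousAt hU).eventually hnear)
  exact ⟨ε, hε, C, hC, fun t ht => hball (by rwa [Real.dist_eq])⟩
end

section
/- Let A be an m×m matrix over a commutative ring. Then ∑_{S ⊆ Fin m} (−1)^{S.card} · det A[S,S] = det (1 − A), where the sum ranges over all finsets S of Fin m. (Equivalently, the supertrace of the action of A on the full exterior algebra, ∑_k (−1)^k · trace(Λ^k A), equals det(1−A).) -/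
/-!
Expanding `det (-A + 1)` multilinearly in the rows gives one term for each set `S` of rows
taken from `-A`, the others being rows of the identity. Such a matrix is block triangular with
an identity block off `S`, so its determinant is the principal minor of `-A` on `S`, that is
`(-1) ^ #S` times the principal minor of `A` on `S`.
-/

open Matrix

namespace Matrix

variable {n R : Type*} [Fintype n] [DecidableEq n] [CommRing R]

theorem det_add_eq_sum_det_piecewise (M N : Matrix n n R) :
    (M + N).det = ∑ S : Finset n, (of fun i => if i ∈ S then M i else N i).det :=
  detRowAlternating.map_add_univ M N

theorem det_piecewise_one (M : Matrix n n R) (S : Finset n) :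
    (of fun i => if i ∈ S then M i else (1 : Matrix n n R) i).det =
      (M.submatrix ((↑) : S → n) (↑)).det := by
  rw [twoBlockTriangular_det _ (· ∈ S)]
  · have h_in : toSquareBlockProp (of fun i => if i ∈ S then M i else (1 : Matrix n n R) i)
        (· ∈ S) = M.submatrix (↑) (↑) := by
      ext i j
      simp [toSquareBlockProp_def]
    have h_out : toSquareBlockProp (of fun i => if i ∈ S then M i else (1 : Matrix n n R) i)
        (· ∉ S) = 1 := by
      ext i j
      simp [toSquareBlockProp_def, i.2, one_apply, Subtype.ext_iff]
    rw [h_in, h_out, det_one, mul_one]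
    -- the two `Fintype` instances on `↥S` agree only up to `Subsingleton`
    convert rfl
  · intro i hi j hj
    simp [hi, one_apply_ne (ne_of_mem_of_not_mem hj hi).symm]

end Matrix

theorem fminor_self_eq_det_submatrix {ι R : Type*} [LinearOrder ι] [CommRing R]
    (A : Matrix ι ι R) (S : Finset ι) :
    fminor A S S = (A.submatrix ((↑) : S → ι) (↑)).det := by
  rw [fminor, dif_pos rfl, ← det_submatrix_equiv_self (S.orderIsoOfFin rfl).toEquiv]
  rfl

/-- The alternating sum over all subsets `S` of the principal minors of `A` equals
`det (1 - A)`: the supertrace of the exterior algebra action of `A` is `det (1 - A)`. -/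
theorem alt_sum_principal_minors_eq_det_one_sub
    {R : Type*} [CommRing R] {m : ℕ} (A : Matrix (Fin m) (Fin m) R) :
    ∑ S : Finset (Fin m), (-1 : R) ^ S.card * fminor A S S = (1 - A).det := by
  rw [sub_eq_neg_add, det_add_eq_sum_det_piecewise]
  refine Finset.sum_congr rfl fun S _ => ?_
  rw [det_piecewise_one, fminor_self_eq_det_submatrix, ← Fintype.card_coe S, ← det_neg]
  rfl
end

section
/- Over the Laurent polynomial ring ℤ[s,s⁻¹], let h = s•diag(1,−1), h' = s⁻¹•diag(1,−1) (so h·h' = 1), e = [[0,1],[0,0]], f = [[0,0],[1,0]], and for n ≥ 1 define the matrices on the n-fold tensor power (indexed by Fin n → Fin 2, with the tensor/Kronecker product of a family of 2×2 matrices having entries the product of the factors' entries): H_n = h^{⊗n}, H'_n = (h')^{⊗n}, E_n = ∑_{i=1}^n 1^{⊗(i−1)} ⊗ e ⊗ (h')^{⊗(n−i)}, and F_n = ∑_{i=1}^n h^{⊗(i−1)} ⊗ f ⊗ 1^{⊗(n−i)}. Then: (i) H_n · E_n = − E_n · H_n; (ii) H_n · F_n = − F_n · H_n; and (iii) (s −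 s⁻¹) • (E_n·F_n − F_n·E_n) = H_n − H'_n. -/
open Matrix

/-- The Laurent polynomial `s` in `ℤ[s,s⁻¹]` (`s` plays the role of `t^{1/2}`). -/
noncomputable def sL : LaurentPolynomial ℤ := LaurentPolynomial.T 1

/-- The Laurent polynomial `s⁻¹` in `ℤ[s,s⁻¹]`. -/
noncomputable def sLinv : LaurentPolynomial ℤ := LaurentPolynomial.T (-1)

/-- `h = s • diag(1,-1)`. -/
noncomputable def hmat : Matrix (Fin 2) (Fin 2) (LaurentPolynomial ℤ) :=
  sL • Matrix.diagonal ![1, -1]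

/-- `h' = s⁻¹ • diag(1,-1)`, so that `h * h' = 1`. -/
noncomputable def hmat' : Matrix (Fin 2) (Fin 2) (LaurentPolynomial ℤ) :=
  sLinv • Matrix.diagonal ![1, -1]

/-- `e = [[0,1],[0,0]]`. -/
noncomputable def emat : Matrix (Fin 2) (Fin 2) (LaurentPolynomial ℤ) :=
  !![0, 1; 0, 0]

/-- `f = [[0,0],[1,0]]`. -/
noncomputable def fmat : Matrix (Fin 2) (Fin 2) (LaurentPolynomial ℤ) :=
  !![0, 0; 1, 0]

/-- The `n`-fold Kronecker (tensor) product of a family of `2 × 2` matrices: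
the matrix indexed by `Fin n → Fin 2` whose `(φ,ψ)` entry is
`∏ j, (M j) (φ j) (ψ j)`. -/
noncomputable def tensorPow {n : ℕ}
    (M : Fin n → Matrix (Fin 2) (Fin 2) (LaurentPolynomial ℤ)) :
    Matrix (Fin n → Fin 2) (Fin n → Fin 2) (LaurentPolynomial ℤ) :=
  fun φ ψ => ∏ j, M j (φ j) (ψ j)

/-- `H_n = h^{⊗n}`. -/
noncomputable def Hn (n : ℕ) := tensorPow (fun _ : Fin n => hmat)

/-- `H'_n = (h')^{⊗n}`. -/
noncomputable def Hn' (n : ℕ) := tensorPow (fun _ : Fin n => hmat')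

/-- `E_n = ∑_{i=1}^n 1^{⊗(i-1)} ⊗ e ⊗ (h')^{⊗(n-i)}`. -/
noncomputable def En (n : ℕ) :=
  ∑ i : Fin n, tensorPow (fun j : Fin n =>
    if j < i then 1 else if j = i then emat else hmat')

/-- `F_n = ∑_{i=1}^n h^{⊗(i-1)} ⊗ f ⊗ 1^{⊗(n-i)}`. -/
noncomputable def Fn (n : ℕ) :=
  ∑ i : Fin n, tensorPow (fun j : Fin n =>
    if j < i then hmat else if j = i then fmat else 1)

/-!
Each summand of `E_n` and `F_n` is a tensor power, and a product of tensor powers is computed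
slotwise, so two tensor powers commute up to the sign `(-1)^k`, where `k` counts the slots in
which the factors anticommute. Since `h` anticommutes with `e` and `f` and commutes with `1` and
`h'`, `H_n` anticommutes with every summand. In `[E_n, F_n]` the cross terms, pairing the
`i`-th summand of `E_n` with the `k`-th of `F_n` for `i ≠ k`, cancel: for `i < k` the factors
anticommute in exactly two slots, for `i > k` in none. The `i`-th diagonal term is
`h^{⊗i} ⊗ [e, f] ⊗ h'^{⊗(n-i-1)}`, and since `(s - s⁻¹) [e, f] = h - h'`, after scaling by
`s - s⁻¹` these terms telescope to `h^{⊗n} - h'^{⊗n}`.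
-/

section Algebra

variable {R A : Type*}

theorem smul_mul_eq_neg_mul_smul [Monoid R] [Ring A] [DistribMulAction R A]
    [IsScalarTower R A A] [SMulCommClass R A A] (c : R) {a b : A} (h : a * b = -(b * a)) :
    (c • a) * b = -(b * (c • a)) := by
  rw [smul_mul_assoc, h, mul_smul_comm, smul_neg]

variable {ι : Type*} [Ring A] (s : Finset ι)

theorem Finset.mul_sum_eq_neg_sum_mul {a : A} {b : ι → A} (h : ∀ i ∈ s, a * b i = -(b i * a)) :
    a * ∑ i ∈ s, b i = -((∑ i ∈ s, b i) * a) := by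
  rw [Finset.mul_sum, Finset.sum_mul, ← Finset.sum_neg_distrib]
  exact Finset.sum_congr rfl h

theorem Finset.sum_mul_sum_sub_sum_mul_sum {a b : ι → A}
    (h : ∀ i ∈ s, ∀ k ∈ s, i ≠ k → Commute (a i) (b k)) :
    (∑ i ∈ s, a i) * (∑ k ∈ s, b k) - (∑ k ∈ s, b k) * (∑ i ∈ s, a i)
      = ∑ i ∈ s, (a i * b i - b i * a i) := by
  rw [Finset.sum_mul_sum, Finset.sum_mul_sum, Finset.sum_comm (s := s) (t := s),
    ← Finset.sum_sub_distrib]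
  refine Finset.sum_congr rfl fun i hi => ?_
  rw [← Finset.sum_sub_distrib]
  refine Finset.sum_eq_single i (fun k hk hki => ?_) (absurd hi)
  rw [(h k hk i hi hki).eq, sub_self]

end Algebra

section TensorPow

variable {n : ℕ} (M N : Fin n → Matrix (Fin 2) (Fin 2) (LaurentPolynomial ℤ))

theorem tensorPow_mul : tensorPow M * tensorPow N = tensorPow fun j => M j * N j := by
  ext φ ψ
  simp only [tensorPow, Matrix.mul_apply, Fintype.prod_sum, Finset.prod_mul_distrib]

theorem tensorPow_smul (c : Fin n → LaurentPolynomial ℤ) :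
    tensorPow (fun j => c j • M j) = (∏ j, c j) • tensorPow M := by
  ext φ ψ
  simp only [tensorPow, Matrix.smul_apply, smul_eq_mul, Finset.prod_mul_distrib]

theorem tensorPow_mul_eq_neg_one_pow_smul (S : Finset (Fin n))
    (hS : ∀ j ∈ S, M j * N j = -(N j * M j)) (hSc : ∀ j ∉ S, Commute (M j) (N j)) :
    tensorPow M * tensorPow N
      = ((-1) ^ S.card : LaurentPolynomial ℤ) • (tensorPow N * tensorPow M) := by
  have hslot : (fun j => M j * N j) =
      fun j => (if j ∈ S then -1 else 1 : LaurentPolynomial ℤ) • (N j * M j) := by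
    funext j
    by_cases hj : j ∈ S
    · rw [if_pos hj, hS j hj, neg_one_smul]
    · rw [if_neg hj, one_smul, (hSc j hj).eq]
  rw [tensorPow_mul, tensorPow_mul, hslot, tensorPow_smul, Fintype.prod_ite_mem,
    Finset.prod_const]

theorem tensorPow_update_apply (i : Fin n) (X : Matrix (Fin 2) (Fin 2) (LaurentPolynomial ℤ))
    (φ ψ : Fin n → Fin 2) :
    tensorPow (Function.update M i X) φ ψ = X (φ i) (ψ i) * ∏ j ∈ {i}ᶜ, M j (φ j) (ψ j) := by
  rw [tensorPow, Fintype.prod_eq_mul_prod_compl i, Function.update_self]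
  congr 1
  refine Finset.prod_congr rfl fun j hj => ?_
  rw [Function.update_of_ne (Finset.mem_compl.1 hj ∘ Finset.mem_singleton.2)]

theorem tensorPow_update_sub (i : Fin n) (X Y : Matrix (Fin 2) (Fin 2) (LaurentPolynomial ℤ)) :
    tensorPow (Function.update M i (X - Y))
      = tensorPow (Function.update M i X) - tensorPow (Function.update M i Y) := by
  ext φ ψ
  simp only [Matrix.sub_apply, tensorPow_update_apply, sub_mul]

theorem tensorPow_update_smul (i : Fin n) (c : LaurentPolynomial ℤ)
    (X : Matrix (Fin 2) (Fin 2) (LaurentPolynomial ℤ)) :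
    tensorPow (Function.update M i (c • X)) = c • tensorPow (Function.update M i X) := by
  ext φ ψ
  simp only [Matrix.smul_apply, tensorPow_update_apply, smul_eq_mul, mul_assoc]

end TensorPow

theorem diagonal_mul_emat : diagonal ![1, -1] * emat = -(emat * diagonal ![1, -1]) := by
  ext i j : 1; fin_cases i <;> fin_cases j <;> simp [emat, vecMul_diagonal]

theorem diagonal_mul_fmat : diagonal ![1, -1] * fmat = -(fmat * diagonal ![1, -1]) := by
  ext i j : 1; fin_cases i <;> fin_cases j <;> simp [fmat, vecMul_diagonal]

theorem emat_mul_fmat_sub_fmat_mul_emat : emat * fmat - fmat * emat = diagonal ![1, -1] := by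
  ext i j : 1; fin_cases i <;> fin_cases j <;> simp [emat, fmat]

theorem hmat_mul_emat : hmat * emat = -(emat * hmat) :=
  smul_mul_eq_neg_mul_smul sL diagonal_mul_emat

theorem emat_mul_hmat : emat * hmat = -(hmat * emat) :=
  (neg_eq_iff_eq_neg.mpr hmat_mul_emat).symm

theorem hmat_mul_fmat : hmat * fmat = -(fmat * hmat) :=
  smul_mul_eq_neg_mul_smul sL diagonal_mul_fmat

theorem hmat'_mul_fmat : hmat' * fmat = -(fmat * hmat') :=
  smul_mul_eq_neg_mul_smul sLinv diagonal_mul_fmat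

theorem commute_hmat_hmat' : Commute hmat hmat' :=
  ((Commute.refl _).smul_left _).smul_right _

theorem smul_emat_mul_fmat_sub : (sL - sLinv) • (emat * fmat - fmat * emat) = hmat - hmat' := by
  rw [emat_mul_fmat_sub_fmat_mul_emat, sub_smul, hmat, hmat']

section Coproduct

noncomputable def eFactors (n : ℕ) (i : Fin n) :
    Fin n → Matrix (Fin 2) (Fin 2) (LaurentPolynomial ℤ) :=
  fun j => if j < i then 1 else if j = i then emat else hmat'

noncomputable def fFactors (n : ℕ) (i : Fin n) :
    Fin n → Matrix (Fin 2) (Fin 2) (LaurentPolynomial ℤ) :=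
  fun j => if j < i then hmat else if j = i then fmat else 1

/-- `h^{⊗k} ⊗ (h')^{⊗(n-k)}`. -/
noncomputable def hSplitFactors (n k : ℕ) :
    Fin n → Matrix (Fin 2) (Fin 2) (LaurentPolynomial ℤ) :=
  fun j => if (j : ℕ) < k then hmat else hmat'

theorem En_eq_sum (n : ℕ) : En n = ∑ i, tensorPow (eFactors n i) := rfl

theorem Fn_eq_sum (n : ℕ) : Fn n = ∑ i, tensorPow (fFactors n i) := rfl

variable {n : ℕ} {i j : Fin n}

theorem eFactors_of_lt (h : j < i) : eFactors n i j = 1 := if_pos h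

theorem eFactors_self : eFactors n i i = emat := by simp [eFactors]

theorem eFactors_of_gt (h : i < j) : eFactors n i j = hmat' := by
  simp [eFactors, h.not_gt, h.ne']

theorem fFactors_of_lt (h : j < i) : fFactors n i j = hmat := if_pos h

theorem fFactors_self : fFactors n i i = fmat := by simp [fFactors]

theorem fFactors_of_gt (h : i < j) : fFactors n i j = 1 := by
  simp [fFactors, h.not_gt, h.ne']

theorem Hn_mul_tensorPow_eFactors (i : Fin n) :
    Hn n * tensorPow (eFactors n i) = -(tensorPow (eFactors n i) * Hn n) := by
  rw [Hn, tensorPow_mul_eq_neg_one_pow_smul _ _ {i}, Finset.card_singleton, pow_one,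
    neg_one_smul]
  · simpa [eFactors_self] using hmat_mul_emat
  · intro j hj
    rcases lt_or_gt_of_ne (Finset.notMem_singleton.1 hj) with h | h
    · simp [eFactors_of_lt h]
    · simpa [eFactors_of_gt h] using commute_hmat_hmat'

theorem Hn_mul_tensorPow_fFactors (i : Fin n) :
    Hn n * tensorPow (fFactors n i) = -(tensorPow (fFactors n i) * Hn n) := by
  rw [Hn, tensorPow_mul_eq_neg_one_pow_smul _ _ {i}, Finset.card_singleton, pow_one,
    neg_one_smul]
  · simpa [fFactors_self] using hmat_mul_fmat
  · intro j hj
    rcases lt_or_gt_of_ne (Finset.notMem_singleton.1 hj) with h | h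
    · simp [fFactors_of_lt h]
    · simp [fFactors_of_gt h]

/-- For `i < k` the factors anticommute exactly in the slots `i` and `k`; for `k < i` they
commute in every slot. -/
theorem commute_tensorPow_eFactors_fFactors {i k : Fin n} (hik : i ≠ k) :
    Commute (tensorPow (eFactors n i)) (tensorPow (fFactors n k)) := by
  rcases lt_or_gt_of_ne hik with hik | hki
  · rw [Commute, SemiconjBy, tensorPow_mul_eq_neg_one_pow_smul _ _ {i, k},
      Finset.card_pair hik.ne, neg_one_sq, one_smul]
    · intro j hj
      rw [Finset.mem_insert, Finset.mem_singleton] at hj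
      rcases hj with rfl | rfl
      · simpa [eFactors_self, fFactors_of_lt hik] using emat_mul_hmat
      · simpa [eFactors_of_gt hik, fFactors_self] using hmat'_mul_fmat
    · intro j hj
      obtain ⟨hji, hjk⟩ : j ≠ i ∧ j ≠ k := by simpa [not_or] using hj
      rcases lt_or_gt_of_ne hji with hji | hij
      · simp [eFactors_of_lt hji]
      rcases lt_or_gt_of_ne hjk with hjk | hkj
      · simpa [eFactors_of_gt hij, fFactors_of_lt hjk] using commute_hmat_hmat'.symm
      · simp [fFactors_of_gt hkj]
  · rw [Commute, SemiconjBy, tensorPow_mul_eq_neg_one_pow_smul _ _ ∅, Finset.card_empty,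
      pow_zero, one_smul]
    · simp
    · intro j _
      rcases lt_or_ge j i with hji | hij
      · simp [eFactors_of_lt hji]
      · simp [fFactors_of_gt (hki.trans_le hij)]

theorem eFactors_mul_fFactors (i : Fin n) :
    (fun j => eFactors n i j * fFactors n i j)
      = Function.update (hSplitFactors n i) i (emat * fmat) := by
  funext j
  rcases lt_trichotomy j i with h | rfl | h
  · simp [eFactors_of_lt h, fFactors_of_lt h, h.ne, hSplitFactors, h]
  · simp [eFactors_self, fFactors_self]
  · simp [eFactors_of_gt h, fFactors_of_gt h, h.ne', hSplitFactors, h.not_gt]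

theorem fFactors_mul_eFactors (i : Fin n) :
    (fun j => fFactors n i j * eFactors n i j)
      = Function.update (hSplitFactors n i) i (fmat * emat) := by
  funext j
  rcases lt_trichotomy j i with h | rfl | h
  · simp [eFactors_of_lt h, fFactors_of_lt h, h.ne, hSplitFactors, h]
  · simp [eFactors_self, fFactors_self]
  · simp [eFactors_of_gt h, fFactors_of_gt h, h.ne', hSplitFactors, h.not_gt]

theorem update_hSplitFactors_hmat (i : Fin n) :
    Function.update (hSplitFactors n i) i hmat = hSplitFactors n (i + 1) := by
  funext j
  rcases eq_or_ne j i with rfl | h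
  · simp [hSplitFactors]
  · simp [Function.update_of_ne h, hSplitFactors, h.le_iff_lt]

theorem update_hSplitFactors_hmat' (i : Fin n) :
    Function.update (hSplitFactors n i) i hmat' = hSplitFactors n i := by
  simp [hSplitFactors]

theorem smul_commutator_tensorPow_eFactors_fFactors (i : Fin n) :
    (sL - sLinv) • (tensorPow (eFactors n i) * tensorPow (fFactors n i)
        - tensorPow (fFactors n i) * tensorPow (eFactors n i))
      = tensorPow (hSplitFactors n (i + 1)) - tensorPow (hSplitFactors n i) := by
  rw [tensorPow_mul, tensorPow_mul, eFactors_mul_fFactors, fFactors_mul_eFactors,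
    ← tensorPow_update_sub, ← tensorPow_update_smul, smul_emat_mul_fmat_sub,
    tensorPow_update_sub, update_hSplitFactors_hmat, update_hSplitFactors_hmat']

theorem tensorPow_hSplitFactors_self (n : ℕ) : tensorPow (hSplitFactors n n) = Hn n :=
  congrArg tensorPow (funext fun j => if_pos j.isLt)

theorem tensorPow_hSplitFactors_zero (n : ℕ) : tensorPow (hSplitFactors n 0) = Hn' n :=
  congrArg tensorPow (funext fun j => if_neg (Nat.not_lt_zero j))

end Coproduct

theorem quantum_sl2_coproduct_relations_general (n : ℕ) :
    Hn n * En n = -(En n * Hn n) ∧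
    Hn n * Fn n = -(Fn n * Hn n) ∧
    (sL - sLinv) • (En n * Fn n - Fn n * En n) = Hn n - Hn' n := by
  refine ⟨?_, ?_, ?_⟩
  · rw [En_eq_sum]
    exact Finset.mul_sum_eq_neg_sum_mul _ fun i _ => Hn_mul_tensorPow_eFactors i
  · rw [Fn_eq_sum]
    exact Finset.mul_sum_eq_neg_sum_mul _ fun i _ => Hn_mul_tensorPow_fFactors i
  · rw [En_eq_sum, Fn_eq_sum, Finset.sum_mul_sum_sub_sum_mul_sum _
        fun i _ k _ => commute_tensorPow_eFactors_fFactors, Finset.smul_sum,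
      Finset.sum_congr rfl fun i _ => smul_commutator_tensorPow_eFactors_fFactors i,
      Fin.sum_univ_eq_sum_range
        (fun k => tensorPow (hSplitFactors n (k + 1)) - tensorPow (hSplitFactors n k)),
      Finset.sum_range_sub (fun k => tensorPow (hSplitFactors n k)),
      tensorPow_hSplitFactors_self, tensorPow_hSplitFactors_zero]

/-- The `n`-fold coproduct operators of the rescaled generators of
`U_{-1}(sl₂)` satisfy: `H_n` anti-commutes with `E_n` and with `F_n`, and
`(s - s⁻¹) • [E_n, F_n] = H_n - H'_n`. -/
theorem quantum_sl2_coproduct_relations (n : ℕ) (hn : 1 ≤ n) :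
    Hn n * En n = -(En n * Hn n) ∧
    Hn n * Fn n = -(Fn n * Hn n) ∧
    (sL - sLinv) • (En n * Fn n - Fn n * En n) = Hn n - Hn' n :=
  quantum_sl2_coproduct_relations_general n
end
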